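/- arXiv:1712.03200 — 5 statements merged into one kernel-verified Lean document; each statement's English description precedes it below -/
import Mathlib

section
/- In the Weyl group W of type B_n with simple roots α₁ = ε₁-ε₂, ..., α_{n-1} = ε_{n-1}-ε_n, α_n = ε_n, let w₀ be the longest element, σ the reflection in ε₁, and for 1 ≤ k ≤ n let w̃_k be the cycle (1,2,...,n-k+1) acting on coordinates. Set w_k⁺ = w₀ w̃_k and w_k⁻ = w₀ σ w̃_k. Then ℓ(w_k⁺) = (n-1)² + n + k - 1 and ℓ(w_k⁻) = (n-1)² + n - k. -/
open scoped BigOperators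

/-- The standard basis vector `ε_{i+1}` (0-indexed `i`) of `ℚⁿ`. -/
def eN (n : ℕ) (i : ℕ) : Fin n → ℚ := fun j => if (j : ℕ) = i then 1 else 0

/-- The positive roots of type `B_n`:
`ε_i - ε_j`, `ε_i + ε_j` (`i < j`) and `ε_i`. -/
def PosB (n : ℕ) : Set (Fin n → ℚ) :=
  {v | (∃ i, i < n ∧ v = eN n i) ∨
    ∃ i j, i < j ∧ j < n ∧ (v = eN n i - eN n j ∨ v = eN n i + eN n j)}

/-- The length of a Weyl group element, i.e. the number of positive roots it
sends to negative roots. -/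
noncomputable def lenB (n : ℕ) (w : (Fin n → ℚ) → (Fin n → ℚ)) : ℕ :=
  Set.ncard {β | β ∈ PosB n ∧ -(w β) ∈ PosB n}

/-- The linear action on `ℚⁿ` of the cycle `(1, 2, …, i+1)` (1-indexed) on the
coordinates: it sends `ε_a ↦ ε_{π(a)}` where `π = Fin.cycleRange i`. -/
def cycAct (n : ℕ) (i : Fin n) : (Fin n → ℚ) → (Fin n → ℚ) :=
  fun v j => v ((Fin.cycleRange i)⁻¹ j)

/-- The longest element `w₀ = -Id` of `W(B_n)`. -/
def w0B (n : ℕ) : (Fin n → ℚ) → (Fin n → ℚ) := fun v => -v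

/-- The reflection `σ_{ε₁}` in `ε₁`, negating the first coordinate. -/
def sigB (n : ℕ) : (Fin n → ℚ) → (Fin n → ℚ) := fun v j => if (j : ℕ) = 0 then -(v j) else v j

/-- `w_k⁺ = w₀ ∘ w̃_k`, where `w̃_k` is the cycle `(1, 2, …, n-k+1)`,
realized with `i = ⟨n - k, _⟩`. -/
def wplus (n : ℕ) (i : Fin n) : (Fin n → ℚ) → (Fin n → ℚ) := w0B n ∘ cycAct n i

/-- `w_k⁻ = w₀ ∘ σ_{ε₁} ∘ w̃_k`. -/
def wminus (n : ℕ) (i : Fin n) : (Fin n → ℚ) → (Fin n → ℚ) := w0B n ∘ sigB n ∘ cycAct n i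

namespace Stmt3Aux

lemma eN_at (n a : ℕ) (j : Fin n) : eN n a j = if (j : ℕ) = a then 1 else 0 := rfl

/-- Parametrization of the positive roots by pairs. -/
def Ffun (n : ℕ) (p : Fin n × Fin n) : Fin n → ℚ :=
  if (p.1 : ℕ) = p.2 then eN n p.1
  else if (p.1 : ℕ) < p.2 then eN n p.1 - eN n p.2
  else eN n p.2 + eN n p.1

lemma Ffun_mem (n : ℕ) (p : Fin n × Fin n) : Ffun n p ∈ PosB n := by
  unfold Ffun
  split_ifs with h1 h2
  · exact Or.inl ⟨p.1, p.1.isLt, rfl⟩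
  · exact Or.inr ⟨p.1, p.2, h2, p.2.isLt, Or.inl rfl⟩
  · exact Or.inr ⟨p.2, p.1, by omega, p.1.isLt, Or.inr rfl⟩

lemma PosB_eq_range (n : ℕ) : PosB n = Set.range (Ffun n) := by
  apply Set.Subset.antisymm
  · rintro v (⟨i, hi, rfl⟩ | ⟨i, j, hij, hj, rfl | rfl⟩)
    · exact ⟨(⟨i, hi⟩, ⟨i, hi⟩), by simp [Ffun]⟩
    · refine ⟨(⟨i, by omega⟩, ⟨j, hj⟩), ?_⟩
      simp [Ffun, hij, Nat.ne_of_lt hij]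
    · refine ⟨(⟨j, hj⟩, ⟨i, by omega⟩), ?_⟩
      simp [Ffun, Nat.ne_of_gt hij, not_lt_of_gt hij]
  · rintro v ⟨p, rfl⟩
    exact Ffun_mem n p

lemma Ffun_fst (n : ℕ) (a b : Fin n) : Ffun n (a, b) a = 1 := by
  unfold Ffun
  split_ifs with h1 h2 <;> simp_all [eN] <;> omega

lemma Ffun_snd (n : ℕ) (a b : Fin n) (h : (a : ℕ) ≠ b) :
    Ffun n (a, b) b = if (a : ℕ) < b then -1 else 1 := by
  unfold Ffun
  split_ifs with h1 h2 <;> simp_all [eN] <;> omega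

lemma Ffun_other (n : ℕ) (a b j : Fin n)
    (h1 : (j : ℕ) ≠ a) (h2 : (j : ℕ) ≠ b) : Ffun n (a, b) j = 0 := by
  unfold Ffun
  split_ifs <;> simp_all [eN]

lemma mem_fst (n : ℕ) (a b c d : Fin n) (h : Ffun n (a, b) = Ffun n (c, d)) :
    (c : ℕ) = a ∨ (c : ℕ) = b := by
  by_contra hx
  push_neg at hx
  have h0 := Ffun_other n a b c hx.1 hx.2
  rw [h, Ffun_fst] at h0
  norm_num at h0

lemma mem_snd (n : ℕ) (a b c d : Fin n) (h : Ffun n (a, b) = Ffun n (c, d))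
    (hq : (c : ℕ) ≠ d) : (d : ℕ) = a ∨ (d : ℕ) = b := by
  by_contra hx
  push_neg at hx
  have h0 := Ffun_other n a b d hx.1 hx.2
  rw [h, Ffun_snd n c d hq] at h0
  split_ifs at h0 <;> norm_num at h0

lemma Ffun_inj (n : ℕ) : Function.Injective (Ffun n) := by
  rintro ⟨a, b⟩ ⟨c, d⟩ h
  have m2 := mem_fst n c d a b h.symm
  have goal : (a : ℕ) = c ∧ (b : ℕ) = d → ((a, b) : Fin n × Fin n) = (c, d) := by
    rintro ⟨h1, h2⟩
    rw [Prod.mk.injEq]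
    exact ⟨Fin.ext h1, Fin.ext h2⟩
  by_cases hab : (a : ℕ) = b
  · by_cases hcd : (c : ℕ) = d
    · have m1 := mem_fst n a b c d h
      exact goal ⟨by omega, by omega⟩
    · have m3 := mem_snd n a b c d h hcd
      have m1 := mem_fst n a b c d h
      omega
  · by_cases hcd : (c : ℕ) = d
    · have m4 := mem_snd n c d a b h.symm hab
      omega
    · have m4 := mem_snd n c d a b h.symm hab
      rcases m4 with hbc | hbd
      · -- crossed case: b = c, a = d; contradiction via signs
        have had : (a : ℕ) = d := by omega
        have e1 := congrFun h b
        have e2 := congrFun h a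
        rw [Ffun_snd n a b hab] at e1
        rw [Ffun_fst n a b] at e2
        have hb : b = c := Fin.ext hbc
        have ha : a = d := Fin.ext had
        rw [hb, Ffun_fst n c d] at e1
        rw [ha, Ffun_snd n c d hcd] at e2
        split_ifs at e1 e2 <;> first | omega | (norm_num at e1; done) | (norm_num at e2; done) | norm_num at e1 e2
      · exact goal ⟨by omega, by omega⟩

lemma mem_eN (n x : ℕ) (hx : x < n) : eN n x ∈ PosB n := Or.inl ⟨x, hx, rfl⟩

lemma mem_add (n x y : ℕ) (hx : x < n) (hy : y < n) (hxy : x ≠ y) :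
    eN n x + eN n y ∈ PosB n := by
  rcases Nat.lt_or_ge x y with h | h
  · exact Or.inr ⟨x, y, h, hy, Or.inr rfl⟩
  · have h' : y < x := by omega
    exact Or.inr ⟨y, x, h', hx, Or.inr (by rw [add_comm])⟩

lemma mem_sub_iff (n x y : ℕ) (hx : x < n) (hy : y < n) (hxy : x ≠ y) :
    (eN n x - eN n y ∈ PosB n ↔ x < y) := by
  constructor
  · rintro (⟨c, hc, h⟩ | ⟨c, d, hcd, hd, h | h⟩)
    · have h1 := congrFun h ⟨y, hy⟩
      simp only [Pi.sub_apply, eN_at] at h1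
      split_ifs at h1 <;> first | omega | norm_num at h1
    · have h1 := congrFun h ⟨x, hx⟩
      have h2 := congrFun h ⟨y, hy⟩
      simp only [Pi.sub_apply, eN_at] at h1 h2
      split_ifs at h1 h2 <;> first | omega | (norm_num at h1; done) | (norm_num at h2; done) | norm_num at h1 h2
    · have h1 := congrFun h ⟨y, hy⟩
      simp only [Pi.sub_apply, Pi.add_apply, eN_at] at h1
      split_ifs at h1 <;> first | omega | norm_num at h1
  · intro hlt
    exact Or.inr ⟨x, y, hlt, hy, Or.inl rfl⟩

lemma not_mem_neg (n x : ℕ) (hx : x < n) : -(eN n x) ∉ PosB n := by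
  rintro (⟨c, hc, h⟩ | ⟨c, d, hcd, hd, h | h⟩)
  · have h1 := congrFun h ⟨c, hc⟩
    simp only [Pi.neg_apply, eN_at] at h1
    split_ifs at h1 <;> norm_num at h1
  · have h1 := congrFun h ⟨c, by omega⟩
    simp only [Pi.neg_apply, Pi.sub_apply, eN_at] at h1
    split_ifs at h1 <;> first | omega | norm_num at h1
  · have h1 := congrFun h ⟨c, by omega⟩
    simp only [Pi.neg_apply, Pi.add_apply, eN_at] at h1
    split_ifs at h1 <;> first | omega | norm_num at h1

lemma not_mem_negsub (n x y : ℕ) (hx : x < n) (hy : y < n) (hxy : x ≠ y) :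
    -(eN n x) - eN n y ∉ PosB n := by
  rintro (⟨c, hc, h⟩ | ⟨c, d, hcd, hd, h | h⟩)
  · have h1 := congrFun h ⟨c, hc⟩
    simp only [Pi.sub_apply, Pi.neg_apply, eN_at] at h1
    split_ifs at h1 <;> first | omega | norm_num at h1
  · have h1 := congrFun h ⟨c, by omega⟩
    simp only [Pi.sub_apply, Pi.neg_apply, eN_at] at h1
    split_ifs at h1 <;> first | omega | norm_num at h1
  · have h1 := congrFun h ⟨c, by omega⟩
    simp only [Pi.sub_apply, Pi.add_apply, Pi.neg_apply, eN_at] at h1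
    split_ifs at h1 <;> first | omega | norm_num at h1

lemma cycAct_eN (n : ℕ) (i a : Fin n) :
    cycAct n i (eN n a) = eN n (i.cycleRange a) := by
  funext j
  unfold cycAct
  simp only [eN_at]
  have hiff : (((i.cycleRange)⁻¹ j : Fin n) : ℕ) = (a : ℕ) ↔ (j : ℕ) = ((i.cycleRange a : Fin n) : ℕ) := by
    rw [Fin.val_eq_val, Fin.val_eq_val, Equiv.Perm.inv_eq_iff_eq]
  simp only [hiff]

lemma cycAct_sub (n : ℕ) (i : Fin n) (u v : Fin n → ℚ) :
    cycAct n i (u - v) = cycAct n i u - cycAct n i v := rfl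

lemma cycAct_add (n : ℕ) (i : Fin n) (u v : Fin n → ℚ) :
    cycAct n i (u + v) = cycAct n i u + cycAct n i v := rfl

lemma sigB_sub (n : ℕ) (u v : Fin n → ℚ) :
    sigB n (u - v) = sigB n u - sigB n v := by
  funext j
  simp only [sigB, Pi.sub_apply]
  split_ifs <;> ring

lemma sigB_add (n : ℕ) (u v : Fin n → ℚ) :
    sigB n (u + v) = sigB n u + sigB n v := by
  funext j
  simp only [sigB, Pi.add_apply]
  split_ifs <;> ring

lemma sigB_eN (n x : ℕ) (hx : x ≠ 0) : sigB n (eN n x) = eN n x := by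
  funext j
  unfold sigB
  split_ifs with h
  · rw [eN_at]
    rw [if_neg (by omega)]
    ring
  · rfl

lemma sigB_eN0 (n : ℕ) : sigB n (eN n 0) = -(eN n 0) := by
  funext j
  unfold sigB
  split_ifs with h
  · rfl
  · simp [eN, h]

lemma cycVal (m : ℕ) (i a : Fin (m + 1)) :
    ((i.cycleRange a : Fin (m + 1)) : ℕ) =
      if (a : ℕ) < i then (a : ℕ) + 1 else if (a : ℕ) = i then 0 else a := by
  rcases lt_trichotomy a i with h | h | h
  · rw [Fin.coe_cycleRange_of_lt h, if_pos (show (a : ℕ) < (i : ℕ) from h)]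
  · have h' : (a : ℕ) = i := congrArg Fin.val h
    rw [Fin.cycleRange_of_eq h]
    simp [h']
  · have h' : (i : ℕ) < a := h
    rw [Fin.cycleRange_of_gt h, if_neg (by omega), if_neg (by omega)]

lemma cycVal_ne (m : ℕ) (i a b : Fin (m + 1)) (hab : (a : ℕ) ≠ b) :
    ((i.cycleRange a : Fin (m + 1)) : ℕ) ≠ ((i.cycleRange b : Fin (m + 1)) : ℕ) := by
  intro hx
  exact hab (congrArg Fin.val ((i.cycleRange).injective (Fin.ext hx)))

lemma inv_set (n : ℕ) (w : (Fin n → ℚ) → (Fin n → ℚ)) (cond : Fin n × Fin n → Prop)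
    (hco : ∀ p, (-(w (Ffun n p)) ∈ PosB n ↔ cond p)) :
    {β | β ∈ PosB n ∧ -(w β) ∈ PosB n} = Ffun n '' {p | cond p} := by
  ext v
  simp only [Set.mem_setOf_eq, Set.mem_image]
  constructor
  · rintro ⟨hv, hw⟩
    rw [PosB_eq_range] at hv
    obtain ⟨p, rfl⟩ := hv
    exact ⟨p, (hco p).1 hw, rfl⟩
  · rintro ⟨p, hp, rfl⟩
    exact ⟨Ffun_mem n p, (hco p).2 hp⟩

lemma len_eq (n : ℕ) (w : (Fin n → ℚ) → (Fin n → ℚ)) (cond : Fin n × Fin n → Prop)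
    [DecidablePred cond] (hco : ∀ p, (-(w (Ffun n p)) ∈ PosB n ↔ cond p)) :
    lenB n w = (Finset.univ.filter cond).card := by
  unfold lenB
  rw [inv_set n w cond hco, Set.ncard_image_of_injective _ (Ffun_inj n),
    Set.ncard_eq_toFinset_card', Set.toFinset_setOf]

lemma plus_cond (m : ℕ) (i : Fin (m + 1)) (p : Fin (m + 1) × Fin (m + 1)) :
    (-(wplus (m + 1) i (Ffun (m + 1) p)) ∈ PosB (m + 1)) ↔
      ¬((p.1 : ℕ) < p.2 ∧ (p.2 : ℕ) = i) := by
  obtain ⟨a, b⟩ := p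
  simp only [wplus, w0B, Function.comp_apply, neg_neg]
  unfold Ffun
  dsimp only
  have hi : (i : ℕ) < m + 1 := i.is_lt
  have ha : (a : ℕ) < m + 1 := a.is_lt
  have hb : (b : ℕ) < m + 1 := b.is_lt
  split_ifs with h1 h2
  · rw [cycAct_eN]
    exact iff_of_true (mem_eN _ _ (Fin.is_lt _)) (by omega)
  · rw [cycAct_sub, cycAct_eN, cycAct_eN,
      mem_sub_iff _ _ _ (Fin.is_lt _) (Fin.is_lt _) (cycVal_ne m i a b h1),
      cycVal, cycVal]
    split_ifs <;> omega
  · rw [cycAct_add, cycAct_eN, cycAct_eN]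
    exact iff_of_true
      (mem_add _ _ _ (Fin.is_lt _) (Fin.is_lt _) (cycVal_ne m i b a (by omega))) (by omega)

lemma minus_cond (m : ℕ) (i : Fin (m + 1)) (p : Fin (m + 1) × Fin (m + 1)) :
    (-(wminus (m + 1) i (Ffun (m + 1) p)) ∈ PosB (m + 1)) ↔
      ((p.1 : ℕ) ≠ i ∧ ((p.2 : ℕ) < p.1 → (p.2 : ℕ) ≠ i)) := by
  obtain ⟨a, b⟩ := p
  simp only [wminus, w0B, Function.comp_apply, neg_neg]
  unfold Ffun
  dsimp only
  have hi : (i : ℕ) < m + 1 := i.is_lt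
  have ha : (a : ℕ) < m + 1 := a.is_lt
  have hb : (b : ℕ) < m + 1 := b.is_lt
  have hπ : ∀ x : Fin (m + 1), ((i.cycleRange x : Fin (m + 1)) : ℕ) = 0 ↔ (x : ℕ) = i := by
    intro x
    rw [cycVal]
    have := x.is_lt
    split_ifs <;> (try simp only [false_iff, true_iff, Nat.succ_ne_zero]) <;> omega
  split_ifs with h1 h2
  · -- a = b (vals): short root
    rw [cycAct_eN]
    by_cases hz : ((i.cycleRange a : Fin (m + 1)) : ℕ) = 0
    · rw [hz, sigB_eN0]
      refine iff_of_false (not_mem_neg _ 0 (by omega)) ?_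
      intro hc
      exact hc.1 ((hπ a).1 hz)
    · rw [sigB_eN _ _ hz]
      exact iff_of_true (mem_eN _ _ (Fin.is_lt _))
        ⟨fun he => hz ((hπ a).2 he), fun hlt => absurd hlt (by omega)⟩
  · -- a < b : root eN a - eN b
    rw [cycAct_sub, cycAct_eN, cycAct_eN, sigB_sub]
    by_cases hza : ((i.cycleRange a : Fin (m + 1)) : ℕ) = 0
    · have hzb : ((i.cycleRange b : Fin (m + 1)) : ℕ) ≠ 0 := by
        have := cycVal_ne m i a b h1
        omega
      rw [hza, sigB_eN0, sigB_eN _ _ hzb]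
      refine iff_of_false
        (not_mem_negsub _ 0 _ (by omega) (Fin.is_lt _) (Ne.symm hzb)) ?_
      intro hc
      exact hc.1 ((hπ a).1 hza)
    · by_cases hzb : ((i.cycleRange b : Fin (m + 1)) : ℕ) = 0
      · rw [hzb, sigB_eN0, sigB_eN _ _ hza, sub_neg_eq_add]
        refine iff_of_true (mem_add _ _ _ (Fin.is_lt _) (by omega) hza) ?_
        have hbi := (hπ b).1 hzb
        exact ⟨by omega, fun hlt => absurd hlt (by omega)⟩
      · rw [sigB_eN _ _ hza, sigB_eN _ _ hzb,
          mem_sub_iff _ _ _ (Fin.is_lt _) (Fin.is_lt _) (cycVal_ne m i a b h1)]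
        have hai : (a : ℕ) ≠ i := fun he => hza ((hπ a).2 he)
        have hbi : (b : ℕ) ≠ i := fun he => hzb ((hπ b).2 he)
        rw [cycVal, cycVal]
        split_ifs <;> omega
  · -- b < a : root eN b + eN a
    have hba : (b : ℕ) < a := by omega
    rw [cycAct_add, cycAct_eN, cycAct_eN, sigB_add]
    by_cases hzb : ((i.cycleRange b : Fin (m + 1)) : ℕ) = 0
    · have hza : ((i.cycleRange a : Fin (m + 1)) : ℕ) ≠ 0 := by
        have := cycVal_ne m i a b h1
        omega
      rw [hzb, sigB_eN0, sigB_eN _ _ hza, neg_add_eq_sub]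
      refine iff_of_false ?_ ?_
      · rw [mem_sub_iff _ _ _ (Fin.is_lt _) (by omega) hza]
        omega
      · intro hc
        exact hc.2 hba ((hπ b).1 hzb)
    · by_cases hza : ((i.cycleRange a : Fin (m + 1)) : ℕ) = 0
      · rw [hza, sigB_eN _ _ hzb, sigB_eN0, ← sub_eq_add_neg]
        refine iff_of_false ?_ ?_
        · rw [mem_sub_iff _ _ _ (Fin.is_lt _) (by omega) hzb]
          omega
        · intro hc
          exact hc.1 ((hπ a).1 hza)
      · rw [sigB_eN _ _ hzb, sigB_eN _ _ hza]
        refine iff_of_true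
          (mem_add _ _ _ (Fin.is_lt _) (Fin.is_lt _) (cycVal_ne m i b a (by omega))) ?_
        exact ⟨fun he => hza ((hπ a).2 he), fun _ he => hzb ((hπ b).2 he)⟩

lemma card_plus (m : ℕ) (i : Fin (m + 1)) :
    (Finset.univ.filter
      (fun p : Fin (m + 1) × Fin (m + 1) => ¬((p.1 : ℕ) < p.2 ∧ (p.2 : ℕ) = i))).card
      = (m + 1) * (m + 1) - i := by
  classical
  have hsplit := Finset.card_filter_add_card_filter_not
    (s := (Finset.univ : Finset (Fin (m + 1) × Fin (m + 1))))
    (p := fun p : Fin (m + 1) × Fin (m + 1) => ((p.1 : ℕ) < p.2 ∧ (p.2 : ℕ) = i))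
  have hP : Finset.univ.filter
      (fun p : Fin (m + 1) × Fin (m + 1) => ((p.1 : ℕ) < p.2 ∧ (p.2 : ℕ) = i))
      = Finset.Iio i ×ˢ {i} := by
    ext p
    simp only [Finset.mem_filter, Finset.mem_univ, true_and, Finset.mem_product,
      Finset.mem_Iio, Finset.mem_singleton, Fin.lt_def, Fin.ext_iff]
    omega
  have hPcard : (Finset.Iio i ×ˢ ({i} : Finset (Fin (m + 1)))).card = (i : ℕ) := by
    rw [Finset.card_product, Fin.card_Iio, Finset.card_singleton, mul_one]
  have huniv : (Finset.univ : Finset (Fin (m + 1) × Fin (m + 1))).card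
      = (m + 1) * (m + 1) := by
    rw [Finset.card_univ, Fintype.card_prod, Fintype.card_fin]
  rw [hP, hPcard] at hsplit
  have hconv : (Finset.univ.filter
      (fun p : Fin (m + 1) × Fin (m + 1) => ¬((p.1 : ℕ) < p.2 ∧ (p.2 : ℕ) = i))).card
      = (Finset.univ.filter
      (fun p : Fin (m + 1) × Fin (m + 1) =>
        ¬((fun p : Fin (m + 1) × Fin (m + 1) => ((p.1 : ℕ) < p.2 ∧ (p.2 : ℕ) = i)) p))).card := rfl
  rw [hconv]
  omega

lemma card_minus (m : ℕ) (i : Fin (m + 1)) :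
    (Finset.univ.filter
      (fun p : Fin (m + 1) × Fin (m + 1) =>
        ((p.1 : ℕ) ≠ i ∧ ((p.2 : ℕ) < p.1 → (p.2 : ℕ) ≠ i)))).card
      = m * m + i := by
  classical
  have key : Finset.univ.filter
      (fun p : Fin (m + 1) × Fin (m + 1) =>
        ((p.1 : ℕ) ≠ i ∧ ((p.2 : ℕ) < p.1 → (p.2 : ℕ) ≠ i)))
      = (({i}ᶜ : Finset (Fin (m + 1))) ×ˢ Finset.univ) \ (Finset.Ioi i ×ˢ {i}) := by
    ext p
    simp only [Finset.mem_filter, Finset.mem_univ, true_and, Finset.mem_sdiff,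
      Finset.mem_product, Finset.mem_compl, Finset.mem_singleton, Finset.mem_Ioi,
      Fin.lt_def, Fin.ext_iff, and_true, not_and]
    omega
  have hsub : (Finset.Ioi i ×ˢ ({i} : Finset (Fin (m + 1))))
      ⊆ (({i}ᶜ : Finset (Fin (m + 1))) ×ˢ Finset.univ) := by
    intro p hp
    simp only [Finset.mem_product, Finset.mem_Ioi, Finset.mem_singleton] at hp
    simp only [Finset.mem_product, Finset.mem_compl, Finset.mem_singleton, Finset.mem_univ,
      and_true]
    intro he
    rw [he] at hp
    exact absurd hp.1 (lt_irrefl i)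
  have c1 : ((({i}ᶜ : Finset (Fin (m + 1))) ×ˢ (Finset.univ : Finset (Fin (m + 1)))).card)
      = m * (m + 1) := by
    rw [Finset.card_product, Finset.card_compl, Finset.card_singleton, Finset.card_univ,
      Fintype.card_fin]
    congr 1
  have c2 : ((Finset.Ioi i ×ˢ ({i} : Finset (Fin (m + 1)))).card) = m - (i : ℕ) := by
    rw [Finset.card_product, Fin.card_Ioi, Finset.card_singleton, mul_one]
    omega
  rw [key, Finset.card_sdiff_of_subset hsub, c1, c2]
  have hi : (i : ℕ) < m + 1 := i.is_lt
  have hmm : m * (m + 1) = m * m + m := by ring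
  omega

end Stmt3Aux

/-- In `W(B_n)`, `ℓ(w_k⁺) = (n-1)² + n + k - 1` and `ℓ(w_k⁻) = (n-1)² + n - k`
for `1 ≤ k ≤ n`. -/
theorem stmt3 (n k : ℕ) (hn : 1 ≤ n) (hk1 : 1 ≤ k) (hkn : k ≤ n) :
    lenB n (wplus n ⟨n - k, by omega⟩) = (n - 1) ^ 2 + n + k - 1 ∧
    lenB n (wminus n ⟨n - k, by omega⟩) = (n - 1) ^ 2 + n - k := by
  classical
  obtain ⟨m, rfl⟩ : ∃ m, n = m + 1 := ⟨n - 1, by omega⟩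
  set i : Fin (m + 1) := ⟨m + 1 - k, by omega⟩ with hidef
  have hival : (i : ℕ) = m + 1 - k := rfl
  have hsq : (m + 1 - 1) ^ 2 = m * m := by
    rw [Nat.add_sub_cancel, pow_two]
  have hprod : (m + 1) * (m + 1) = m * m + 2 * m + 1 := by ring
  constructor
  · rw [Stmt3Aux.len_eq (m + 1) (wplus (m + 1) i)
      (fun p : Fin (m + 1) × Fin (m + 1) => ¬((p.1 : ℕ) < p.2 ∧ (p.2 : ℕ) = i))
      (Stmt3Aux.plus_cond m i), Stmt3Aux.card_plus m i]
    omega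
  · rw [Stmt3Aux.len_eq (m + 1) (wminus (m + 1) i)
      (fun p : Fin (m + 1) × Fin (m + 1) =>
        ((p.1 : ℕ) ≠ i ∧ ((p.2 : ℕ) < p.1 → (p.2 : ℕ) ≠ i)))
      (Stmt3Aux.minus_cond m i), Stmt3Aux.card_minus m i]
    omega
end

section
/- Let D(c) ⊆ {+,•}ⁿ be defined recursively by: D applied to a length-1 clan is the singleton of that clan; D((+,c')) = {(+,d') : d' ∈ D(c')}; D((•,c')) = {(•,d') : d' ∈ D(c')} unless n is even and h_{n-1}(c') = n-1, in which case D((•,c')) = {(•,d') : d' ∈ D(c')} ∪ {(+,d') : d' ∈ D(c')}. Then the cardinality of D(c) equals 2^{#J(c)}, where J(c) = {j ∈ {1,...,n-1} : j odd, h_j(c) = j, and c_{n-j} = •}. -/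
/-- A clan of length `n` is a string in `{+, •}ⁿ`, encoded as `Fin n → Bool`
with `true` representing `+` and `false` representing `•` (a number). -/
abbrev Clan (n : ℕ) := Fin n → Bool

/-- The sequence `h_j` attached to a clan `c = (c₁, …, c_n)`: `h₀ = 0`, and
`h_j = h_{j-1}` if `c_{n-j+1} = •`, `h_j = h_{j-1} + 1` if `c_{n-j+1} = +` and
`h_{j-1} = j - 1`, `h_j = h_{j-1} + 2` if `c_{n-j+1} = +` and `h_{j-1} ≤ j - 2`.
(Indices of `c` are 1-indexed in the informal description; here `c_{n-j+1}`
is the entry of `c : Fin n → Bool` at the 0-indexed position `n - j`.) -/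
def hseq (n : ℕ) (c : Clan n) : ℕ → ℕ
  | 0 => 0
  | j + 1 =>
    let p := hseq n c j
    if hj : n - (j + 1) < n then
      if c ⟨n - (j + 1), hj⟩ = false then p
      else if p = j then p + 1
      else if p + 1 ≤ j then p + 2
      else p
    else p

/-- `J(c)`: the set of odd `j` with `1 ≤ j ≤ n - 1` such that `h_j(c) = j` and
`c_{n-j} = •` (1-indexed), i.e. the entry at 0-indexed position `n - j - 1` is `•`. -/
def Jset (n : ℕ) (c : Clan n) : Set ℕ :=
  {j | j % 2 = 1 ∧ 1 ≤ j ∧ j ≤ n - 1 ∧ hseq n c j = j ∧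
    ∀ h : n - j - 1 < n, c ⟨n - j - 1, h⟩ = false}

/-- The recursively defined set `D(c)` of clans indexing the terms of the
characteristic cycle of `L_c`: for a clan of length `0` (hence for length `1`)
it is the singleton `{c}`; `D((+, c')) = {(+, d') : d' ∈ D(c')}`;
`D((•, c')) = {(•, d') : d' ∈ D(c')}` unless `n` is even and `h_{n-1}(c') = n-1`,
in which case `D((•, c')) = {(•, d') : d' ∈ D(c')} ∪ {(+, d') : d' ∈ D(c')}`. -/
def Dset : (n : ℕ) → Clan n → Set (Clan n)
  | 0, c => {c}
  | n + 1, c =>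
    let c' : Clan n := fun i => c i.succ
    if c 0 = true then
      {d | d 0 = true ∧ (fun i : Fin n => d i.succ) ∈ Dset n c'}
    else if (n + 1) % 2 = 0 ∧ hseq n c' n = n then
      {d | (fun i : Fin n => d i.succ) ∈ Dset n c'}
    else
      {d | d 0 = false ∧ (fun i : Fin n => d i.succ) ∈ Dset n c'}

/-- `N(n)`: the number of clans of length `n` with `J(c) = ∅`, i.e. whose
characteristic cycle is irreducible. -/
noncomputable def Ncount (n : ℕ) : ℕ :=
  {c : Clan n | Jset n c = ∅}.ncard

/-- `N(n, j)`: the number of clans of length `n` with `J(c) = ∅` and `h_n(c) = j`. -/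
noncomputable def Ncj (n j : ℕ) : ℕ :=
  {c : Clan n | Jset n c = ∅ ∧ hseq n c n = j}.ncard

/-! Both sides obey the same recursion in the first entry of the clan. Since `h_j` only reads the
last `j` entries, `J(c)` agrees with `J(c')` below `n`, and `n ∈ J(c)` exactly when both signs are
allowed in the first entry of `D(c)`; in that case `#D(c) = 2 #D(c')`, otherwise `#D(c) = #D(c')`. -/

theorem Fin.ncard_setOf_head_mem_tail_mem {α : Type*} {n : ℕ} (T : Set α) (S : Set (Fin n → α)) :
    {d : Fin (n + 1) → α | d 0 ∈ T ∧ Fin.tail d ∈ S}.ncard = T.ncard * S.ncard := by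
  have : {d : Fin (n + 1) → α | d 0 ∈ T ∧ Fin.tail d ∈ S} =
      Fin.consEquiv (fun _ => α) '' (T ×ˢ S) := by
    rw [Equiv.image_eq_preimage_symm]
    rfl
  rw [this, Set.ncard_image_of_injective _ (Equiv.injective _), Set.ncard_prod]

theorem Fin.ncard_setOf_head_eq_tail_mem {α : Type*} {n : ℕ} (a : α) (S : Set (Fin n → α)) :
    {d : Fin (n + 1) → α | d 0 = a ∧ Fin.tail d ∈ S}.ncard = S.ncard := by
  simpa using Fin.ncard_setOf_head_mem_tail_mem {a} S

theorem Fin.ncard_setOf_tail_mem {α : Type*} {n : ℕ} (S : Set (Fin n → α)) :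
    {d : Fin (n + 1) → α | Fin.tail d ∈ S}.ncard = Nat.card α * S.ncard := by
  simpa using Fin.ncard_setOf_head_mem_tail_mem Set.univ S

theorem hseq_succ_of_le {n j : ℕ} (c : Clan (n + 1)) (hj : j ≤ n) :
    hseq (n + 1) c j = hseq n (Fin.tail c) j := by
  induction j with
  | zero => rfl
  | succ k ih =>
    have hidx : (⟨n + 1 - (k + 1), by omega⟩ : Fin (n + 1)) = Fin.succ ⟨n - (k + 1), by omega⟩ := by
      ext; simp only [Fin.val_succ]; omega
    rw [hseq, hseq, dif_pos (by omega), dif_pos (by omega), hidx, ih (by omega)]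
    rfl

-- The case of the recursion for `D` in which `d ∈ D(c)` may start with either sign.
def HeadSplits {n : ℕ} (c : Clan (n + 1)) : Prop :=
  c 0 = false ∧ (n + 1) % 2 = 0 ∧ hseq n (Fin.tail c) n = n

theorem mem_Jset_succ {n j : ℕ} (c : Clan (n + 1)) :
    j ∈ Jset (n + 1) c ↔ j ∈ Jset n (Fin.tail c) ∨ (j = n ∧ HeadSplits c) := by
  simp only [Jset, HeadSplits, Set.mem_ofPred_eq]
  rcases lt_trichotomy j n with hlt | rfl | hgt
  · have hidx : (⟨n + 1 - j - 1, by omega⟩ : Fin (n + 1)) = Fin.succ ⟨n - j - 1, by omega⟩ := by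
      ext; simp only [Fin.val_succ]; omega
    simp only [hseq_succ_of_le c hlt.le, forall_prop_of_true (by omega : n + 1 - j - 1 < n + 1),
      forall_prop_of_true (by omega : n - j - 1 < n), hidx, Fin.tail]
    rw [show j ≤ n + 1 - 1 ↔ j ≤ n - 1 by omega]
    simp only [hlt.ne, false_and, or_false]
  · have hidx : (⟨j + 1 - j - 1, by omega⟩ : Fin (j + 1)) = 0 := by ext; simp
    simp only [hseq_succ_of_le c le_rfl, forall_prop_of_true (by omega : j + 1 - j - 1 < j + 1),
      hidx, Nat.add_sub_cancel, le_refl, true_and]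
    constructor
    · rintro ⟨hodd, -, hh, h0⟩
      exact Or.inr ⟨h0, by omega, hh⟩
    · rintro (⟨-, h₁, h₂, -⟩ | ⟨h0, heven, hh⟩)
      · omega
      · exact ⟨by omega, by omega, hh, h0⟩
  · omega

theorem Jset_finite (n : ℕ) (c : Clan n) : (Jset n c).Finite :=
  (Set.finite_Iic n).subset fun _ ⟨_, _, h, _⟩ => by simp only [Set.mem_Iic]; omega

theorem Jset_zero (c : Clan 0) : Jset 0 c = ∅ :=
  Set.eq_empty_of_forall_notMem fun _ ⟨_, h₁, h₂, _⟩ => by omega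

theorem self_notMem_Jset (n : ℕ) (c : Clan n) : n ∉ Jset n c :=
  fun ⟨_, h₁, h₂, _⟩ => by omega

section succ

variable {n : ℕ} (c : Clan (n + 1))

theorem Jset_succ_of_not_headSplits (hc : ¬HeadSplits c) :
    Jset (n + 1) c = Jset n (Fin.tail c) := by
  ext j
  rw [mem_Jset_succ, or_iff_left fun h => hc h.2]

theorem Jset_succ_of_headSplits (hc : HeadSplits c) :
    Jset (n + 1) c = insert n (Jset n (Fin.tail c)) := by
  ext j
  rw [mem_Jset_succ, Set.mem_insert_iff, and_iff_left hc, or_comm]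

theorem Dset_succ : Dset (n + 1) c =
    if c 0 = true then {d : Clan (n + 1) | d 0 = true ∧ Fin.tail d ∈ Dset n (Fin.tail c)}
    else if (n + 1) % 2 = 0 ∧ hseq n (Fin.tail c) n = n then
      {d : Clan (n + 1) | Fin.tail d ∈ Dset n (Fin.tail c)}
    else {d : Clan (n + 1) | d 0 = false ∧ Fin.tail d ∈ Dset n (Fin.tail c)} := by
  rw [Dset]
  rfl

theorem ncard_Dset_succ_of_not_headSplits (hc : ¬HeadSplits c) :
    (Dset (n + 1) c).ncard = (Dset n (Fin.tail c)).ncard := by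
  rw [Dset_succ]
  split_ifs with h0 hsplit
  · exact Fin.ncard_setOf_head_eq_tail_mem _ _
  · exact absurd ⟨by simpa using h0, hsplit⟩ hc
  · exact Fin.ncard_setOf_head_eq_tail_mem _ _

theorem ncard_Dset_succ_of_headSplits (hc : HeadSplits c) :
    (Dset (n + 1) c).ncard = 2 * (Dset n (Fin.tail c)).ncard := by
  rw [Dset_succ, if_neg (by simp [hc.1]), if_pos hc.2, Fin.ncard_setOf_tail_mem,
    Nat.card_eq_fintype_card, Fintype.card_bool]

end succ

/-- The number of terms of the characteristic cycle of `L_c` is `2^{#J(c)}`: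
the cardinality of `D(c)` equals `2` raised to the cardinality of `J(c)`. -/
theorem stmt8 (n : ℕ) (c : Clan n) :
    (Dset n c).ncard = 2 ^ (Jset n c).ncard := by
  induction n with
  | zero => simp [Dset, Jset_zero]
  | succ n ih =>
    by_cases hc : HeadSplits c
    · rw [ncard_Dset_succ_of_headSplits c hc, Jset_succ_of_headSplits c hc,
        Set.ncard_insert_of_notMem (self_notMem_Jset n _) (Jset_finite n _), pow_succ', ih]
    · rw [ncard_Dset_succ_of_not_headSplits c hc, Jset_succ_of_not_headSplits c hc, ih]
end

section
/- Let N(n) count clans in {+,•}ⁿ with J(c) = ∅ and N(n,j) count those with additionally h_n(c) = j. Then N(n) = 2·N(n-1) if n is odd, and N(n) = 4·N(n-2) - N(n-2, n-2) if n is even. -/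
/-! Prepending a letter `b` to a clan `d` of length `n` leaves `h_1, …, h_n` unchanged, and it
adds to `J` at most the index `n`, which happens exactly when `n` is odd, `h_n(d) = n` and
`b = •`. Hence `N(n+1) = 2 N(n)` for even `n` and `N(n+1) = 2 N(n) - N(n, n)` for odd `n`.
Below the diagonal `h_j = j` the sequence moves in steps of `2`, and a clan with `J(c) = ∅` can
leave the diagonal only at an even index, so `h_j` is even whenever `h_j < j`. For even `n`
this forces a clan with `h_{n+1} = n+1` to start with `+` and to have `h_n = n` on its tail,
so `N(n+1, n+1) = N(n, n)`, and the three identities combine to the theorem. -/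

theorem Set.ncard_setOf_fin_cons {α : Type*} [Fintype α] {n : ℕ}
    (P : (Fin (n + 1) → α) → Prop) :
    {c | P c}.ncard = ∑ a, {d : Fin n → α | P (Fin.cons a d)}.ncard := by
  classical
  simp only [Set.ncard_eq_toFinset_card', Set.toFinset_ofPred, Finset.card_filter]
  rw [← (Fin.consEquiv fun _ => α).sum_comp, Fintype.sum_prod_type]
  rfl

theorem Fin.cons_apply_of_val_eq_succ {n : ℕ} {α : Type*} (a : α) (d : Fin n → α)
    (i : Fin (n + 1)) (k : Fin n) (h : i.val = k.val + 1) :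
    (Fin.cons a d : Fin (n + 1) → α) i = d k := by
  obtain rfl : i = k.succ := Fin.ext h
  exact Fin.cons_succ (α := fun _ => α) a d k

theorem Fin.cons_apply_of_val_eq_zero {n : ℕ} {α : Type*} (a : α) (d : Fin n → α)
    (i : Fin (n + 1)) (h : i.val = 0) :
    (Fin.cons a d : Fin (n + 1) → α) i = a := by
  obtain rfl : i = 0 := Fin.ext h
  exact Fin.cons_zero (α := fun _ => α) a d

section Clans

variable {n : ℕ}

theorem hseq_succ (c : Clan n) (j : ℕ) (hn : 0 < n) :
    hseq n c (j + 1) =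
      if c ⟨n - (j + 1), by omega⟩ = false then hseq n c j
      else if hseq n c j = j then hseq n c j + 1
      else if hseq n c j + 1 ≤ j then hseq n c j + 2
      else hseq n c j := by
  rw [hseq, dif_pos (by omega)]

theorem hseq_le (c : Clan n) (j : ℕ) : hseq n c j ≤ j := by
  induction j with
  | zero => rfl
  | succ j ih => rw [hseq]; split_ifs <;> omega

theorem hseq_cons (b : Bool) (d : Clan n) {j : ℕ} (hj : j ≤ n) :
    hseq (n + 1) (Fin.cons b d) j = hseq n d j := by
  induction j with
  | zero => rfl
  | succ j ih =>
    rw [hseq_succ _ _ (by omega), hseq_succ _ _ (by omega), ih (by omega),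
      Fin.cons_apply_of_val_eq_succ b d _ ⟨n - (j + 1), by omega⟩ (by simp only; omega)]

theorem hseq_cons_succ (b : Bool) (d : Clan n) :
    hseq (n + 1) (Fin.cons b d) (n + 1) =
      if b = false then hseq n d n
      else if hseq n d n = n then hseq n d n + 1
      else hseq n d n + 2 := by
  rw [hseq_succ _ _ n.succ_pos, hseq_cons b d le_rfl,
    Fin.cons_apply_of_val_eq_zero b d _ (by simp only; omega)]
  have := hseq_le d n
  split_ifs <;> omega

theorem even_hseq_of_lt {c : Clan n} (hJ : Jset n c = ∅) {k : ℕ} (hk : k ≤ n)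
    (hlt : hseq n c k < k) : Even (hseq n c k) := by
  induction k with
  | zero => omega
  | succ k ih =>
    have hle := hseq_le c k
    rw [hseq_succ c k (by omega)] at hlt ⊢
    split_ifs at hlt ⊢ with hb hdiag hbelow
    · rcases hle.lt_or_eq with hlt' | hdiag
      · exact ih (by omega) hlt'
      · rw [hdiag, Nat.even_iff]
        by_contra hodd
        have hmem : k ∈ Jset n c := by
          refine ⟨by omega, by omega, by omega, hdiag, fun _ => ?_⟩
          convert hb using 3; omega
        simp [hJ] at hmem
    · omega
    · exact (ih (by omega) (by omega)).add (by decide)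
    · omega

theorem mem_Jset_cons (b : Bool) (d : Clan n) (j : ℕ) :
    j ∈ Jset (n + 1) (Fin.cons b d) ↔
      j ∈ Jset n d ∨ (j = n ∧ Odd n ∧ hseq n d n = n ∧ b = false) := by
  simp only [Jset, Set.mem_ofPred_eq]
  rcases lt_trichotomy j n with hj | hj | hj
  · have hentry (h) : (Fin.cons b d : Clan (n + 1)) ⟨n + 1 - j - 1, h⟩ = d ⟨n - j - 1, by omega⟩ :=
      Fin.cons_apply_of_val_eq_succ b d _ _ (by simp only; omega)
    have h1 : n + 1 - j - 1 < n + 1 := by omega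
    have h2 : n - j - 1 < n := by omega
    simp only [hseq_cons b d hj.le, hentry, forall_prop_of_true h1, forall_prop_of_true h2,
      hj.ne, false_and, or_false, show j ≤ n + 1 - 1 ↔ j ≤ n - 1 by omega]
  · subst j
    simp only [hseq_cons b d le_rfl, Nat.odd_iff, add_tsub_cancel_right, add_tsub_cancel_left,
      tsub_self, zero_tsub, Order.lt_add_one_iff, zero_le, Fin.zero_eta, Fin.cons_zero, le_refl,
      forall_const, true_and]
    constructor
    · rintro ⟨hodd, -, hdiag, hb⟩
      exact .inr ⟨hodd, hdiag, hb⟩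
    · rintro (⟨-, h1, h2, -⟩ | ⟨hodd, hdiag, hb⟩)
      · omega
      · exact ⟨hodd, by omega, hdiag, hb⟩
  · simp only [hj.ne', false_and, or_false]
    omega

theorem Jset_cons_eq_empty_iff (b : Bool) (d : Clan n) :
    Jset (n + 1) (Fin.cons b d) = ∅ ↔ Jset n d = ∅ ∧ (Odd n → hseq n d n = n → b = true) := by
  simp [Set.eq_empty_iff_forall_notMem, mem_Jset_cons, not_or, forall_and]

theorem hseq_cons_succ_eq_iff {b : Bool} {d : Clan n} (hn : Even n) (hJ : Jset n d = ∅) :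
    hseq (n + 1) (Fin.cons b d) (n + 1) = n + 1 ↔ b = true ∧ hseq n d n = n := by
  rcases (hseq_le d n).eq_or_lt with hdiag | hlt
  · cases b <;> simp [hseq_cons_succ, hdiag]
  · have hpar := Nat.even_iff.1 (even_hseq_of_lt hJ le_rfl hlt)
    rw [Nat.even_iff] at hn
    cases b <;> simp [hseq_cons_succ, hlt.ne] <;> omega

theorem Ncount_succ :
    Ncount (n + 1) = Ncount n + {d : Clan n | Jset n d = ∅ ∧ (Odd n → hseq n d n ≠ n)}.ncard := by
  rw [Ncount, Set.ncard_setOf_fin_cons, Fintype.sum_bool]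
  simp only [Jset_cons_eq_empty_iff, implies_true, and_true, Bool.false_eq_true, imp_false]
  rfl

theorem Ncount_succ_of_even (hn : Even n) : Ncount (n + 1) = 2 * Ncount n := by
  simp only [Ncount_succ, Nat.not_odd_iff_even.mpr hn, false_implies, and_true, two_mul]
  rfl

theorem Ncount_succ_add_Ncj_of_odd (hn : Odd n) : Ncount (n + 1) + Ncj n n = 2 * Ncount n := by
  have hsplit : Ncj n n + {d : Clan n | Jset n d = ∅ ∧ hseq n d n ≠ n}.ncard = Ncount n :=
    Set.ncard_inter_add_ncard_sdiff_eq_ncard {d | Jset n d = ∅} {d | hseq n d n = n}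
  simp only [Ncount_succ, hn, forall_const]
  omega

theorem Ncj_succ_of_even (hn : Even n) : Ncj (n + 1) (n + 1) = Ncj n n := by
  have key (b : Bool) (d : Clan n) :
      (Jset (n + 1) (Fin.cons b d) = ∅ ∧ hseq (n + 1) (Fin.cons b d) (n + 1) = n + 1) ↔
        b = true ∧ Jset n d = ∅ ∧ hseq n d n = n := by
    rw [Jset_cons_eq_empty_iff]
    constructor
    · rintro ⟨⟨hJ, -⟩, hdiag⟩
      obtain ⟨hb, hdiag⟩ := (hseq_cons_succ_eq_iff hn hJ).1 hdiag
      exact ⟨hb, hJ, hdiag⟩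
    · rintro ⟨rfl, hJ, hdiag⟩
      exact ⟨⟨hJ, fun _ _ => rfl⟩, (hseq_cons_succ_eq_iff hn hJ).2 ⟨rfl, hdiag⟩⟩
  rw [Ncj, Set.ncard_setOf_fin_cons, Fintype.sum_bool]
  simp only [key]
  simp [Ncj]

end Clans

/-- `N(n) = 2 N(n-1)` if `n` is odd, and `N(n) = 4 N(n-2) - N(n-2, n-2)`
if `n` is even. -/
theorem stmt12 (n : ℕ) (hn : 1 ≤ n) :
    (Odd n → Ncount n = 2 * Ncount (n - 1)) ∧
    (Even n → (Ncount n : ℤ) = 4 * Ncount (n - 2) - Ncj (n - 2) (n - 2)) := by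
  constructor
  · rintro ⟨m, rfl⟩
    simpa using Ncount_succ_of_even (even_two_mul m)
  · intro heven
    obtain ⟨m, rfl⟩ : ∃ m, n = m + 2 := ⟨n - 2, by rcases heven with ⟨k, rfl⟩; omega⟩
    have hm : Even m := by simpa [Nat.even_add] using heven
    have h₁ := Ncount_succ_add_Ncj_of_odd hm.add_one
    have h₂ := Ncount_succ_of_even hm
    have h₃ := Ncj_succ_of_even hm
    rw [Nat.add_sub_cancel, show m + 2 = m + 1 + 1 from rfl]
    omega
end

section
/- For n = 2l, the number N(2l,2l) of clans c ∈ {+,•}^{2l} with J(c) = ∅ and h_{2l}(c) = 2l equals the Catalan number C(l+1) = (1/(l+2))·binomial(2l+2, l+1). -/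
namespace Stmt13Aux

/-- deficit step: `true` (+) decreases (clamped at 0), `false` (•) increases. -/
def dstep (d : ℕ) (b : Bool) : ℕ := if b then d - 1 else d + 1

/-- run the deficit along a word. -/
def dF : ℕ → List Bool → ℕ
  | d, [] => d
  | d, b :: u => dF (dstep d b) u

/-- "Dyck" side condition: never a `true` at deficit 0. -/
def DPre : ℕ → List Bool → Prop
  | _, [] => True
  | d, b :: u => (b = true → d ≠ 0) ∧ DPre (dstep d b) u

instance instDecDPre : ∀ d u, Decidable (DPre d u)
  | _, [] => isTrue trivial
  | d, b :: u => @instDecidableAnd _ _ _ (instDecDPre (dstep d b) u)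

/-- "Good" side condition: at odd times with deficit 0, the letter is `true`. -/
def GPre : ℕ → ℕ → List Bool → Prop
  | _, _, [] => True
  | d, j, b :: u => (j % 2 = 1 → d = 0 → b = true) ∧ GPre (dstep d b) (j + 1) u

instance instDecGPre : ∀ d j u, Decidable (GPre d j u)
  | _, _, [] => isTrue trivial
  | d, j, b :: u => @instDecidableAnd _ _ _ (instDecGPre (dstep d b) (j + 1) u)

def IsDyckA (w : List Bool) : Prop := DPre 0 w ∧ dF 0 w = 0

def GoodA (u : List Bool) : Prop := GPre 0 0 u ∧ dF 0 u = 0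

instance : DecidablePred IsDyckA := fun _ => instDecidableAnd
instance : DecidablePred GoodA := fun _ => instDecidableAnd

@[simp] lemma dstep_false (d : ℕ) : dstep d false = d + 1 := rfl
@[simp] lemma dstep_true (d : ℕ) : dstep d true = d - 1 := rfl

@[simp] lemma dF_nil (d : ℕ) : dF d [] = d := rfl
@[simp] lemma dF_cons (d : ℕ) (b : Bool) (u : List Bool) :
    dF d (b :: u) = dF (dstep d b) u := rfl
@[simp] lemma DPre_nil (d : ℕ) : DPre d [] := trivial
@[simp] lemma DPre_cons (d : ℕ) (b : Bool) (u : List Bool) :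
    DPre d (b :: u) ↔ (b = true → d ≠ 0) ∧ DPre (dstep d b) u := Iff.rfl
@[simp] lemma GPre_nil (d j : ℕ) : GPre d j [] := trivial
@[simp] lemma GPre_cons (d j : ℕ) (b : Bool) (u : List Bool) :
    GPre d j (b :: u) ↔ (j % 2 = 1 → d = 0 → b = true) ∧ GPre (dstep d b) (j + 1) u := Iff.rfl

lemma dF_append (d : ℕ) (u v : List Bool) : dF d (u ++ v) = dF (dF d u) v := by
  induction u generalizing d with
  | nil => rfl
  | cons b u ih => simp [ih]

lemma DPre_append (d : ℕ) (u v : List Bool) :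
    DPre d (u ++ v) ↔ DPre d u ∧ DPre (dF d u) v := by
  induction u generalizing d with
  | nil => simp
  | cons b u ih => simp [ih, and_assoc]

lemma GPre_append (d j : ℕ) (u v : List Bool) :
    GPre d j (u ++ v) ↔ GPre d j u ∧ GPre (dF d u) (j + u.length) v := by
  induction u generalizing d j with
  | nil => simp
  | cons b u ih =>
    simp only [List.cons_append, GPre_cons, ih, List.length_cons, dF_cons, and_assoc]
    rw [show j + 1 + u.length = j + (u.length + 1) from by omega]

lemma GPre_add_two (d j : ℕ) (u : List Bool) : GPre d (j + 2) u ↔ GPre d j u := by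
  induction u generalizing d j with
  | nil => simp
  | cons b u ih =>
    simp only [GPre_cons]
    rw [show j + 2 + 1 = (j + 1) + 2 from by omega, ih]
    constructor <;> rintro ⟨h1, h2⟩ <;> exact ⟨fun hj => h1 (by omega), h2⟩

lemma GPre_even (d k : ℕ) (u : List Bool) : GPre d (2 * k) u ↔ GPre d 0 u := by
  induction k with
  | zero => rfl
  | succ k ih => rw [show 2 * (k + 1) = 2 * k + 2 by ring, GPre_add_two, ih]

lemma DPre_mono {d d' : ℕ} (h : d ≤ d') (u : List Bool) (hu : DPre d u) : DPre d' u := by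
  induction u generalizing d d' with
  | nil => trivial
  | cons b u ih =>
    obtain ⟨h1, h2⟩ := hu
    refine ⟨fun hb => by have := h1 hb; omega, ih (d := dstep d b) ?_ h2⟩
    cases b <;> simp [dstep] <;> omega

lemma dF_shift {d : ℕ} {u : List Bool} (hu : DPre d u) (k : ℕ) :
    dF (d + k) u = dF d u + k := by
  induction u generalizing d with
  | nil => rfl
  | cons b u ih =>
    obtain ⟨h1, h2⟩ := hu
    cases b with
    | false =>
      simp only [dF_cons, dstep_false]
      rw [show d + k + 1 = (d + 1) + k by ring]
      exact ih h2
    | true =>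
      have hd : d ≠ 0 := h1 rfl
      simp only [dF_cons, dstep_true]
      rw [show d + k - 1 = (d - 1) + k by omega]
      exact ih h2

lemma GPre_of_DPre : ∀ (u : List Bool) (e d j : ℕ), DPre e u → GPre (e + d + 1) j u := by
  intro u
  induction u with
  | nil => intros; trivial
  | cons b u ih =>
    intro e d j hu
    obtain ⟨h1, h2⟩ := hu
    refine ⟨fun _ h => by omega, ?_⟩
    cases b with
    | false =>
      have := ih (e + 1) d (j + 1) h2
      convert this using 2 <;> simp [dstep] <;> omega
    | true =>
      have he : e ≠ 0 := h1 rfl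
      have := ih (e - 1) d (j + 1) h2
      convert this using 2 <;> simp [dstep] <;> omega

lemma dF_parity {d : ℕ} {u : List Bool} (hu : DPre d u) :
    (dF d u + u.length) % 2 = d % 2 := by
  induction u generalizing d with
  | nil => simp
  | cons b u ih =>
    obtain ⟨h1, h2⟩ := hu
    have H := ih h2
    cases b with
    | false =>
      simp only [dstep_false] at H
      simp only [dF_cons, dstep_false, List.length_cons]
      omega
    | true =>
      have hd : d ≠ 0 := h1 rfl
      simp only [dstep_true] at H
      simp only [dF_cons, dstep_true, List.length_cons]
      omega

lemma length_even {w : List Bool} (h1 : DPre 0 w) (h2 : dF 0 w = 0) : w.length % 2 = 0 := by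
  have := dF_parity h1
  omega


/-- first-passage decomposition: from deficit `d+1`, if the word ends at deficit `≤ d`,
it splits at the first passage through `d`. -/
lemma split : ∀ (n : ℕ) (v : List Bool), v.length ≤ n → ∀ d : ℕ, dF (d + 1) v ≤ d →
    ∃ w r, v = w ++ true :: r ∧ DPre 0 w ∧ dF 0 w = 0 := by
  intro n
  induction n with
  | zero =>
    intro v hv d hd
    obtain rfl : v = [] := List.eq_nil_of_length_eq_zero (by omega)
    simp only [dF_nil] at hd
    omega
  | succ n ih =>
    intro v hv d hd
    cases v with
    | nil => simp only [dF_nil] at hd; omega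
    | cons b v' =>
      cases b with
      | true => exact ⟨[], v', rfl, trivial, rfl⟩
      | false =>
        simp only [dF_cons, dstep_false] at hd
        rw [show d + 1 + 1 = d + 2 from by omega] at hd
        have hlen' : v'.length ≤ n := by simp only [List.length_cons] at hv; omega
        obtain ⟨w1, r1, hv', hw1, hw1'⟩ := ih v' hlen' (d + 1)
          (by rw [show d + 1 + 1 = d + 2 from by omega]; omega)
        have hdw1 : dF (d + 2) w1 = d + 2 := by
          have := dF_shift hw1 (d + 2); simpa [hw1'] using this
        have hr1 : dF (d + 1) r1 ≤ d := by
          have h2 : dF (d + 2) v' = dF (d + 1) r1 := by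
            rw [hv', dF_append, hdw1]
            simp
          omega
        have hlen2 : r1.length ≤ n := by
          have : v'.length = w1.length + 1 + r1.length := by
            rw [hv']; simp only [List.length_append, List.length_cons]; omega
          omega
        obtain ⟨w2, r2, hr, hw2, hw2'⟩ := ih r1 hlen2 d hr1
        refine ⟨false :: w1 ++ true :: w2, r2, ?_, ?_, ?_⟩
        · rw [hv', hr]; simp
        · refine ⟨by simp, ?_⟩
          show DPre 1 (w1 ++ true :: w2)
          rw [DPre_append]
          refine ⟨DPre_mono (by omega) _ hw1, ?_⟩
          have h1 : dF 1 w1 = 1 := by have := dF_shift hw1 1; simpa [hw1'] using this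
          rw [h1]
          refine ⟨fun _ h => by omega, ?_⟩
          rw [dstep_true]
          exact hw2
        · have h1 : dF 1 w1 = 1 := by have := dF_shift hw1 1; simpa [hw1'] using this
          simp only [dF_cons, dF_append, dstep_false, zero_add, h1, dstep_true, hw2']

/-- injectivity of the first-return decomposition, one-sided. -/
lemma decomp_inj_le {w1 r1 w2 r2 : List Bool}
    (e : w1 ++ true :: r1 = w2 ++ true :: r2)
    (hw1 : DPre 0 w1) (hw1' : dF 0 w1 = 0) (hw2 : DPre 0 w2)
    (hle : w1.length ≤ w2.length) : w1 = w2 ∧ r1 = r2 := by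
  have p1 : w1 <+: w2 ++ true :: r2 := e ▸ ⟨true :: r1, rfl⟩
  have p2 : w2 <+: w2 ++ true :: r2 := ⟨true :: r2, rfl⟩
  obtain ⟨s, hs⟩ := List.prefix_of_prefix_length_le p1 p2 hle
  match s, hs with
  | [], hs =>
    simp only [List.append_nil] at hs
    subst hs
    obtain rfl : r1 = r2 := by
      have := List.append_cancel_left e
      simpa using this
    exact ⟨rfl, rfl⟩
  | b :: s', hs =>
    exfalso
    subst hs
    rw [List.append_assoc] at e
    have e2 := List.append_cancel_left e
    have hb : b = true := by
      have := congrArg (fun l => l.head?) e2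
      simpa using this
    subst hb
    rw [DPre_append] at hw2
    exact hw2.2.1 rfl (by rw [hw1'])

lemma decomp_inj {w1 r1 w2 r2 : List Bool}
    (e : w1 ++ true :: r1 = w2 ++ true :: r2)
    (hw1 : DPre 0 w1) (hw1' : dF 0 w1 = 0) (hw2 : DPre 0 w2) (hw2' : dF 0 w2 = 0) :
    w1 = w2 ∧ r1 = r2 := by
  rcases le_total w1.length w2.length with h | h
  · exact decomp_inj_le e hw1 hw1' hw2 h
  · obtain ⟨h1, h2⟩ := decomp_inj_le e.symm hw2 hw2' hw1 h
    exact ⟨h1.symm, h2.symm⟩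

/-! ### Composition/decomposition of Dyck and Good words -/

lemma dyck_comp {w r : List Bool} (hw : IsDyckA w) (hr : IsDyckA r) :
    IsDyckA (false :: w ++ true :: r) := by
  obtain ⟨hw1, hw2⟩ := hw
  obtain ⟨hr1, hr2⟩ := hr
  have h1 : dF 1 w = 1 := by have := dF_shift hw1 1; simpa [hw2] using this
  constructor
  · refine ⟨by simp, ?_⟩
    show DPre 1 (w ++ true :: r)
    rw [DPre_append]
    exact ⟨DPre_mono (by omega) _ hw1, by rw [h1]; exact ⟨fun _ h => by omega,
      by rw [show dstep 1 true = 0 from rfl]; exact hr1⟩⟩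
  · simp only [dF_cons, dF_append, show dstep 0 false = 1 from rfl, h1,
      show dstep 1 true = 0 from rfl, hr2]

lemma dyck_decomp {u : List Bool} (hu : IsDyckA u) (hne : u ≠ []) :
    ∃ w r, u = false :: w ++ true :: r ∧ IsDyckA w ∧ IsDyckA r := by
  obtain ⟨hu1, hu2⟩ := hu
  match u, hne with
  | true :: v, _ => exact absurd (hu1.1 rfl) (by simp)
  | false :: v, _ =>
    have hv : dF 1 v = 0 := by simpa [dstep] using hu2
    obtain ⟨w, r, rfl, hw, hw'⟩ := split v.length v le_rfl 0 (by rw [zero_add]; omega)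
    have h1 : dF 1 w = 1 := by have := dF_shift hw 1; simpa [hw'] using this
    refine ⟨w, r, rfl, ⟨hw, hw'⟩, ?_, ?_⟩
    · have hthis : DPre 1 (w ++ true :: r) := hu1.2
      rw [DPre_append] at hthis
      have h2 := hthis.2.2
      rw [h1] at h2
      exact h2
    · rw [dF_append, h1] at hv
      simpa [dstep] using hv

lemma good_comp_tt {v : List Bool} (hv : GoodA v) : GoodA (true :: true :: v) := by
  obtain ⟨h1, h2⟩ := hv
  refine ⟨⟨by simp, fun _ _ => rfl, ?_⟩, by simpa [dstep] using h2⟩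
  rw [show dstep (dstep 0 true) true = 0 from rfl]
  rw [show (0:ℕ) + 1 + 1 = 2 * 1 by ring, GPre_even]
  exact h1

lemma good_decomp_tt {v : List Bool} (hv : GoodA (true :: true :: v)) : GoodA v := by
  obtain ⟨h1, h2⟩ := hv
  refine ⟨?_, by simpa [dstep] using h2⟩
  have := h1.2.2
  rw [show dstep (dstep 0 true) true = 0 from rfl,
    show (0:ℕ) + 1 + 1 = 2 * 1 by ring, GPre_even] at this
  exact this

lemma good_head_tt {v : List Bool} (hv : GoodA (true :: v)) (hne : v ≠ []) :
    ∃ v', v = true :: v' := by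
  match v, hne with
  | b :: v', _ =>
    have := hv.1.2.1
    rw [show dstep 0 true = 0 from rfl] at this
    exact ⟨v', by rw [this (by norm_num) rfl]⟩

lemma good_comp_exc {w r : List Bool} (hw : IsDyckA w) (hr : GoodA r) :
    GoodA (false :: w ++ true :: r) := by
  obtain ⟨hw1, hw2⟩ := hw
  obtain ⟨hr1, hr2⟩ := hr
  have h1 : dF 1 w = 1 := by have := dF_shift hw1 1; simpa [hw2] using this
  have heven := length_even hw1 hw2
  constructor
  · refine ⟨by norm_num, ?_⟩
    show GPre 1 1 (w ++ true :: r)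
    rw [GPre_append]
    refine ⟨by simpa using GPre_of_DPre w 0 0 1 hw1, ?_⟩
    rw [h1]
    refine ⟨fun _ h => by omega, ?_⟩
    rw [show dstep 1 true = 0 from rfl]
    have : 1 + w.length + 1 = 2 * (w.length / 2 + 1) := by omega
    rw [this, GPre_even]
    exact hr1
  · simp only [dF_cons, dF_append, show dstep 0 false = 1 from rfl, h1,
      show dstep 1 true = 0 from rfl, hr2]

lemma good_decomp_ff {v : List Bool} (hv : GoodA (false :: v)) :
    ∃ w r, v = w ++ true :: r ∧ IsDyckA w ∧ GoodA r := by
  obtain ⟨h1, h2⟩ := hv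
  have hv0 : dF 1 v = 0 := by simpa [dstep] using h2
  obtain ⟨w, r, rfl, hw, hw'⟩ := split v.length v le_rfl 0 (by rw [zero_add]; omega)
  have hdf1 : dF 1 w = 1 := by have := dF_shift hw 1; simpa [hw'] using this
  have heven := length_even hw hw'
  refine ⟨w, r, rfl, ⟨hw, hw'⟩, ?_, ?_⟩
  · have hthis : GPre 1 1 (w ++ true :: r) := h1.2
    rw [GPre_append] at hthis
    have h4' := hthis.2.2
    rw [hdf1] at h4'
    have h4 : GPre 0 (1 + w.length + 1) r := h4'
    rw [show 1 + w.length + 1 = 2 * (w.length / 2 + 1) from by omega, GPre_even] at h4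
    exact h4
  · rw [dF_append, hdf1] at hv0
    simpa [dstep] using hv0

/-! ### Counting -/

open Finset

/-- all words of a given length. -/
def EL : ℕ → Finset (List Bool)
  | 0 => {[]}
  | n + 1 => (EL n).biUnion fun u => {false :: u, true :: u}

lemma mem_EL : ∀ n (u : List Bool), u ∈ EL n ↔ u.length = n := by
  intro n
  induction n with
  | zero =>
    intro u
    simp [EL, List.length_eq_zero_iff]
  | succ n ih =>
    intro u
    simp only [EL, Finset.mem_biUnion, Finset.mem_insert, Finset.mem_singleton, ih]
    constructor
    · rintro ⟨v, hv, rfl | rfl⟩ <;> simp [hv]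
    · intro hu
      cases u with
      | nil => simp at hu
      | cons b v =>
        refine ⟨v, by simpa using hu, ?_⟩
        cases b
        · left; rfl
        · right; rfl

/-- Dyck words of semilength `m`. -/
def DYF (m : ℕ) : Finset (List Bool) := (EL (2 * m)).filter IsDyckA

/-- good words of semilength `l`. -/
def GFc (l : ℕ) : Finset (List Bool) := (EL (2 * l)).filter GoodA

lemma mem_DYF {m : ℕ} {u : List Bool} :
    u ∈ DYF m ↔ u.length = 2 * m ∧ IsDyckA u := by
  rw [DYF, Finset.mem_filter, mem_EL]

lemma mem_GFc {l : ℕ} {u : List Bool} :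
    u ∈ GFc l ↔ u.length = 2 * l ∧ GoodA u := by
  rw [GFc, Finset.mem_filter, mem_EL]

/-- the gluing map for excursions. -/
def phi (p : List Bool × List Bool) : List Bool := false :: p.1 ++ true :: p.2

lemma phi_eq {p q : List Bool × List Bool} (hw1 : IsDyckA p.1) (hw2 : IsDyckA q.1)
    (h : phi p = phi q) : p = q := by
  obtain ⟨w1, r1⟩ := p
  obtain ⟨w2, r2⟩ := q
  rw [phi, phi] at h
  simp only [List.cons_append, List.cons.injEq, true_and] at h
  obtain ⟨a, b⟩ := decomp_inj h hw1.1 hw1.2 hw2.1 hw2.2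
  simp [a, b]

lemma phi_len {p : List Bool × List Bool} : (phi p).length = p.1.length + p.2.length + 2 := by
  rw [phi]
  simp only [List.length_cons, List.length_append]
  omega

lemma biUnion_disj {X : ℕ → Finset (List Bool)} {m : ℕ} :
    ∀ x ∈ Finset.range (m + 1), ∀ y ∈ Finset.range (m + 1), x ≠ y →
      Disjoint (((DYF x) ×ˢ (X (m - x))).image phi) (((DYF y) ×ˢ (X (m - y))).image phi) := by
  intro x _ y _ hxy
  rw [Finset.disjoint_left]
  rintro u hux huy
  simp only [Finset.mem_image, Finset.mem_product] at hux huy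
  obtain ⟨p, ⟨hw1, _⟩, rfl⟩ := hux
  obtain ⟨q, ⟨hw2, _⟩, he⟩ := huy
  rw [mem_DYF] at hw1 hw2
  obtain rfl := phi_eq hw2.2 hw1.2 he
  apply hxy
  have h1 := hw1.1
  rw [hw2.1] at h1
  omega

lemma image_card {X : ℕ → Finset (List Bool)} {k j : ℕ} :
    (((DYF k) ×ˢ (X j)).image phi).card = (DYF k).card * (X j).card := by
  rw [Finset.card_image_of_injOn, Finset.card_product]
  intro p hp q hq h
  rw [Finset.mem_coe, Finset.mem_product] at hp hq
  exact phi_eq (mem_DYF.1 hp.1).2 (mem_DYF.1 hq.1).2 h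

lemma DYF_succ (m : ℕ) :
    DYF (m + 1) = (Finset.range (m + 1)).biUnion
      (fun k => ((DYF k) ×ˢ (DYF (m - k))).image phi) := by
  ext u
  rw [mem_DYF]
  simp only [Finset.mem_biUnion, Finset.mem_range, Finset.mem_image, Finset.mem_product]
  constructor
  · rintro ⟨hlen, hdy⟩
    have hne : u ≠ [] := by
      intro h
      rw [h] at hlen
      simp at hlen
    obtain ⟨w, r, rfl, hw, hr⟩ := dyck_decomp hdy hne
    have hwe := length_even hw.1 hw.2
    have hlen' : w.length + r.length + 2 = 2 * (m + 1) := by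
      simp only [List.length_cons, List.length_append] at hlen
      omega
    exact ⟨w.length / 2, by omega, (w, r),
      ⟨mem_DYF.2 ⟨show w.length = 2 * (w.length / 2) by omega, hw⟩,
       mem_DYF.2 ⟨show r.length = 2 * (m - w.length / 2) by omega, hr⟩⟩, rfl⟩
  · rintro ⟨k, hk, p, ⟨hw, hr⟩, rfl⟩
    rw [mem_DYF] at hw hr
    refine ⟨?_, ?_⟩
    · rw [phi_len, hw.1, hr.1]
      omega
    · obtain ⟨w, r⟩ := p
      exact dyck_comp hw.2 hr.2

lemma catalan_succ_range (n : ℕ) :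
    catalan (n + 1) = ∑ i ∈ Finset.range (n + 1), catalan i * catalan (n - i) := by
  rw [catalan_succ]
  exact Fin.sum_univ_eq_sum_range (fun i => catalan i * catalan (n - i)) (n + 1)

lemma DYF_card : ∀ m, (DYF m).card = catalan m := by
  intro m
  induction m using Nat.strong_induction_on with
  | _ m ih =>
    cases m with
    | zero =>
      have h0 : DYF 0 = {[]} := by
        ext u
        rw [mem_DYF, Finset.mem_singleton]
        constructor
        · rintro ⟨h, _⟩
          exact List.eq_nil_of_length_eq_zero (by omega)
        · rintro rfl
          exact ⟨by simp, trivial, rfl⟩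
      rw [h0]
      simp
    | succ m =>
      rw [DYF_succ, Finset.card_biUnion biUnion_disj, catalan_succ_range]
      refine Finset.sum_congr rfl fun k hk => ?_
      rw [Finset.mem_range] at hk
      rw [image_card, ih k (by omega), ih (m - k) (by omega)]

lemma GFc_succ (l : ℕ) :
    GFc (l + 1) = ((GFc l).image (fun v => true :: true :: v)) ∪
      ((Finset.range (l + 1)).biUnion
        (fun k => ((DYF k) ×ˢ (GFc (l - k))).image phi)) := by
  ext u
  rw [mem_GFc]
  simp only [Finset.mem_union, Finset.mem_biUnion, Finset.mem_range,
    Finset.mem_image, Finset.mem_product]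
  constructor
  · rintro ⟨hlen, hg⟩
    cases u with
    | nil => simp at hlen
    | cons b v =>
      cases b with
      | true =>
        obtain ⟨v', rfl⟩ := good_head_tt hg (by
          intro h
          rw [h] at hlen
          simp only [List.length_cons, List.length_nil] at hlen
          omega)
        left
        refine ⟨v', mem_GFc.2 ⟨?_, good_decomp_tt hg⟩, rfl⟩
        simp only [List.length_cons] at hlen
        omega
      | false =>
        obtain ⟨w, r, rfl, hw, hr⟩ := good_decomp_ff hg
        have hwe := length_even hw.1 hw.2
        have hlen' : w.length + r.length + 2 = 2 * (l + 1) := by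
          simp only [List.length_cons, List.length_append] at hlen
          omega
        right
        exact ⟨w.length / 2, by omega, (w, r),
          ⟨mem_DYF.2 ⟨show w.length = 2 * (w.length / 2) by omega, hw⟩,
           mem_GFc.2 ⟨show r.length = 2 * (l - w.length / 2) by omega, hr⟩⟩, rfl⟩
  · rintro (⟨v, hv, rfl⟩ | ⟨k, hk, p, ⟨hw, hr⟩, rfl⟩)
    · rw [mem_GFc] at hv
      refine ⟨?_, good_comp_tt hv.2⟩
      simp only [List.length_cons, hv.1]
      omega
    · rw [mem_DYF] at hw
      rw [mem_GFc] at hr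
      refine ⟨?_, ?_⟩
      · rw [phi_len, hw.1, hr.1]
        omega
      · obtain ⟨w, r⟩ := p
        exact good_comp_exc hw.2 hr.2

lemma GFc_card : ∀ l, (GFc l).card = catalan (l + 1) := by
  intro l
  induction l using Nat.strong_induction_on with
  | _ l ih =>
    cases l with
    | zero =>
      have h0 : GFc 0 = {[]} := by
        ext u
        rw [mem_GFc, Finset.mem_singleton]
        constructor
        · rintro ⟨h, _⟩
          exact List.eq_nil_of_length_eq_zero (by omega)
        · rintro rfl
          exact ⟨by simp, trivial, rfl⟩
      rw [h0]
      simp [catalan_one]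
    | succ l =>
      have hdisj : Disjoint ((GFc l).image (fun v => true :: true :: v))
          ((Finset.range (l + 1)).biUnion
            (fun k => ((DYF k) ×ˢ (GFc (l - k))).image phi)) := by
        rw [Finset.disjoint_left]
        rintro u hul hur
        simp only [Finset.mem_image, Finset.mem_biUnion, Finset.mem_product] at hul hur
        obtain ⟨v, _, rfl⟩ := hul
        obtain ⟨k, _, p, _, he⟩ := hur
        rw [phi] at he
        simp at he
      rw [GFc_succ, Finset.card_union_of_disjoint hdisj,
        Finset.card_image_of_injective _ (fun a b h => by simpa using h),
        Finset.card_biUnion biUnion_disj, ih l (by omega)]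
      have hsum : ∑ k ∈ Finset.range (l + 1), (((DYF k) ×ˢ (GFc (l - k))).image phi).card
          = ∑ k ∈ Finset.range (l + 1), catalan k * catalan (l + 1 - k) := by
        refine Finset.sum_congr rfl fun k hk => ?_
        rw [Finset.mem_range] at hk
        rw [image_card, DYF_card, ih (l - k) (by omega)]
        congr 2
        omega
      rw [hsum, catalan_succ_range (l + 1)]
      conv_rhs => rw [Finset.sum_range_succ]
      simp only [Nat.sub_self, catalan_zero, mul_one]
      omega


/-! ### Bridge to `hseq` and `Jset` -/

lemma dF_take_succ (u : List Bool) (d j : ℕ) (h : j < u.length) :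
    dF d (u.take (j + 1)) = dstep (dF d (u.take j)) u[j] := by
  rw [List.take_succ, List.getElem?_eq_getElem h]
  rw [dF_append]
  rfl

lemma getElem_idx_congr {u : List Bool} {a b : ℕ} (h : a = b) (ha : a < u.length) :
    u[a] = u[b]'(h ▸ ha) := by subst h; rfl

/-- the time-ordered word of a clan (reverse of the clan). -/
def wrd (n : ℕ) (c : Clan n) : List Bool := (List.ofFn c).reverse

lemma wrd_length (n : ℕ) (c : Clan n) : (wrd n c).length = n := by simp [wrd]

lemma wrd_get (n : ℕ) (c : Clan n) (j : ℕ) (h : j < n) :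
    (wrd n c)[j]'(by rw [wrd_length]; exact h) = c ⟨n - 1 - j, by omega⟩ := by
  simp only [wrd]
  rw [List.getElem_reverse]
  rw [List.getElem_ofFn]
  congr 1
  apply Fin.ext
  simp

lemma hseq_add {n : ℕ} (c : Clan n) : ∀ j, j ≤ n →
    hseq n c j + dF 0 ((wrd n c).take j) = j := by
  intro j
  induction j with
  | zero => simp [hseq]
  | succ j ih =>
    intro hj
    have H := ih (by omega)
    have hlt : n - (j + 1) < n := by omega
    have hjl : j < (wrd n c).length := by rw [wrd_length]; omega
    have hc : c ⟨n - (j + 1), hlt⟩ = (wrd n c)[j]'hjl := by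
      rw [wrd_get n c j (by omega)]
      congr 1
      apply Fin.ext
      simp
      omega
    have htake := dF_take_succ (wrd n c) 0 j hjl
    have hunfold : hseq n c (j + 1) = if c ⟨n - (j + 1), hlt⟩ = false then hseq n c j
        else if hseq n c j = j then hseq n c j + 1
        else if hseq n c j + 1 ≤ j then hseq n c j + 2 else hseq n c j := by
      simp only [hseq, dif_pos hlt]
    obtain ⟨b, hb⟩ : ∃ b, (wrd n c)[j]'hjl = b := ⟨_, rfl⟩
    rw [hb] at hc htake
    rw [hunfold, hc, htake]
    cases b with
    | false =>
      rw [if_pos rfl, dstep_false]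
      omega
    | true =>
      rw [if_neg (by simp), dstep_true]
      by_cases hp : hseq n c j = j
      · rw [if_pos hp]
        omega
      · rw [if_neg hp, if_pos (show hseq n c j + 1 ≤ j by omega)]
        omega

lemma GPre_iff_forall : ∀ (u : List Bool) (d j : ℕ), GPre d j u ↔
    ∀ i (h : i < u.length), (j + i) % 2 = 1 → dF d (u.take i) = 0 → u[i] = true := by
  intro u
  induction u with
  | nil => simp
  | cons b u ih =>
    intro d j
    simp only [GPre_cons, ih]
    constructor
    · rintro ⟨h1, h2⟩ i hi hpar hdf
      cases i with
      | zero =>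
        simp only [List.getElem_cons_zero]
        exact h1 (by omega) (by simpa using hdf)
      | succ i =>
        simp only [List.getElem_cons_succ]
        exact h2 i (by simpa using hi) (by omega)
          (by simpa [List.take_succ_cons] using hdf)
    · intro h
      refine ⟨fun hj hd => ?_, fun i hi hpar hdf => ?_⟩
      · exact h 0 (by simp) (by omega) (by simpa using hd)
      · exact h (i + 1) (by simp; omega) (by omega)
          (by simpa [List.take_succ_cons] using hdf)

lemma good_iff {n : ℕ} (c : Clan n) :
    (Jset n c = ∅ ∧ hseq n c n = n) ↔ GoodA (wrd n c) := by
  have hlen := wrd_length n c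
  have htk : (wrd n c).take n = wrd n c :=
    List.take_of_length_le (by rw [hlen])
  have htot : hseq n c n + dF 0 (wrd n c) = n := by
    have := hseq_add c n le_rfl
    rwa [htk] at this
  constructor
  · rintro ⟨hJ, hn⟩
    refine ⟨?_, by omega⟩
    rw [GPre_iff_forall]
    intro i hi hpar hdf
    rw [hlen] at hi
    by_contra hbt
    have hbf : (wrd n c)[i]'(by rw [hlen]; omega) = false := by
      revert hbt
      cases (wrd n c)[i]'(by rw [hlen]; omega) <;> simp
    refine Set.eq_empty_iff_forall_notMem.mp hJ i
      ⟨by omega, by omega, by omega, ?_, ?_⟩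
    · have := hseq_add c i (by omega)
      omega
    · intro h
      have heq : c ⟨n - i - 1, h⟩ = (wrd n c)[i]'(by rw [hlen]; omega) := by
        rw [wrd_get n c i (by omega)]
        congr 1
        apply Fin.ext
        simp
        omega
      rw [heq, hbf]
  · rintro ⟨hG, hdf⟩
    refine ⟨?_, by omega⟩
    rw [Set.eq_empty_iff_forall_notMem]
    rintro j ⟨hodd, hj1, hjn, hhs, hcf⟩
    have hjlt : j < n := by omega
    have hbt := (GPre_iff_forall (wrd n c) 0 0).1 hG j (by rw [hlen]; omega)
      (by omega) (by have := hseq_add c j (by omega); omega)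
    have h2 : n - j - 1 < n := by omega
    have hx := hcf h2
    have heq : c ⟨n - j - 1, h2⟩ = (wrd n c)[j]'(by rw [hlen]; omega) := by
      rw [wrd_get n c j hjlt]
      congr 1
      apply Fin.ext
      simp
      omega
    rw [heq, hbt] at hx
    simp at hx

end Stmt13Aux

/-- `N(2l, 2l)` equals the Catalan number `C(l+1) = (1/(l+2))·C(2l+2, l+1)`. -/
theorem stmt13 (l : ℕ) :
    Ncj (2 * l) (2 * l) = catalan (l + 1) ∧
    (l + 2) * Ncj (2 * l) (2 * l) = Nat.choose (2 * l + 2) (l + 1) := by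
  classical
  have hcount : Ncj (2 * l) (2 * l) = catalan (l + 1) := by
    rw [Ncj]
    have hfin : {c : Clan (2 * l) | Jset (2 * l) c = ∅ ∧
        hseq (2 * l) c (2 * l) = 2 * l}.Finite := Set.toFinite _
    rw [Set.ncard_eq_toFinset_card _ hfin, ← Stmt13Aux.GFc_card l]
    apply Finset.card_bij (fun c _ => Stmt13Aux.wrd (2 * l) c)
    · intro c hc
      rw [Set.Finite.mem_toFinset] at hc
      rw [Stmt13Aux.mem_GFc]
      exact ⟨Stmt13Aux.wrd_length _ c, (Stmt13Aux.good_iff c).1 hc⟩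
    · intro c1 h1 c2 h2 he
      have h3 : List.ofFn c1 = List.ofFn c2 := List.reverse_injective he
      exact List.ofFn_injective h3
    · intro u hu
      rw [Stmt13Aux.mem_GFc] at hu
      have hlen := hu.1
      have hl0 : ∀ i : Fin (2 * l), 2 * l - 1 - (i : ℕ) < u.length := by
        intro i
        have := i.isLt
        omega
      have hw : Stmt13Aux.wrd (2 * l)
          (fun i : Fin (2 * l) => u[2 * l - 1 - (i : ℕ)]'(hl0 i)) = u := by
        apply List.ext_getElem (by rw [Stmt13Aux.wrd_length, hlen])
        intro i hi1 hi2
        have hi : i < 2 * l := by rwa [Stmt13Aux.wrd_length] at hi1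
        rw [Stmt13Aux.wrd_get (2 * l) _ i hi]
        exact Stmt13Aux.getElem_idx_congr
          (show 2 * l - 1 - (2 * l - 1 - i) = i by omega) _
      refine ⟨fun i : Fin (2 * l) => u[2 * l - 1 - (i : ℕ)]'(hl0 i), ?_, hw⟩
      rw [Set.Finite.mem_toFinset]
      apply (Stmt13Aux.good_iff _).2
      rw [hw]
      exact hu.2
  refine ⟨hcount, ?_⟩
  rw [hcount]
  calc (l + 2) * catalan (l + 1) = Nat.centralBinom (l + 1) :=
        succ_mul_catalan_eq_centralBinom (l + 1)
    _ = (2 * (l + 1)).choose (l + 1) := rfl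
    _ = (2 * l + 2).choose (l + 1) := by rw [show 2 * (l + 1) = 2 * l + 2 by ring]
end

section
/- In W(B_n) with the elements w_k^± = w₀ w̃_k and w₀ σ_{ε₁} w̃_k, the τ-invariants satisfy: τ(w_k⁺) = τ(w_{k+1}⁻) = Π ∖ {α_{n-k}} for k = 1, ..., n-1, τ(w_n⁺) = Π, and τ(w_1⁻) = Π ∖ {α_n}, where τ(w) = {α ∈ Π : w(α) < 0}. -/
/-!
Since `w₀ = -Id`, a simple root `α` lies in `τ(w₀ g)` exactly when `g α` is positive.
The cycle `w̃_k = (1 2 … m+1)`, `m = n - k`, sends `ε_a ↦ ε_{a+1}` for `a ≤ m` and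
`ε_{m+1} ↦ ε_1` and fixes the rest, so it keeps every simple root positive except
`α_m = ε_m - ε_{m+1} ↦ ε_{m+1} - ε_1`. After `σ_{ε₁}` that image becomes `ε_{m+1} + ε_1 > 0`,
while `α_{m+1}` goes from `ε_1 - ε_{m+2}` to `-ε_1 - ε_{m+2} < 0` (from `ε_1` to `-ε_1`
when `m + 1 = n`). A positive root has leading nonzero coordinate `1`, so no root is both
positive and negative.
-/

open scoped BigOperators

/-- The simple root `α_i` of `B_n` (1-indexed): `α_i = ε_i - ε_{i+1}` for
`i < n` and `α_n = ε_n`. -/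
def simpleRoot (n i : ℕ) : Fin n → ℚ := if i < n then eN n (i - 1) - eN n i else eN n (n - 1)

/-- The set `Π` of simple roots of `B_n`. -/
def PiB (n : ℕ) : Set (Fin n → ℚ) := {v | ∃ i, 1 ≤ i ∧ i ≤ n ∧ v = simpleRoot n i}

/-- The `τ`-invariant `τ(w) = {α ∈ Π : w(α) < 0}`. -/
def tauB (n : ℕ) (w : (Fin n → ℚ) → (Fin n → ℚ)) : Set (Fin n → ℚ) :=
  {α | α ∈ PiB n ∧ -(w α) ∈ PosB n}

section Roots

variable {n : ℕ}

lemma eN_mem_posB {a : ℕ} (ha : a < n) : eN n a ∈ PosB n :=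
  Or.inl ⟨a, ha, rfl⟩

lemma eN_sub_eN_mem_posB {a b : ℕ} (hab : a < b) (hb : b < n) : eN n a - eN n b ∈ PosB n :=
  Or.inr ⟨a, b, hab, hb, Or.inl rfl⟩

lemma eN_add_eN_mem_posB {a b : ℕ} (hab : a < b) (hb : b < n) : eN n a + eN n b ∈ PosB n :=
  Or.inr ⟨a, b, hab, hb, Or.inr rfl⟩

lemma exists_leading_eq_one_of_mem_posB {v : Fin n → ℚ} (hv : v ∈ PosB n) :
    ∃ i : Fin n, v i = 1 ∧ ∀ j : Fin n, j < i → v j = 0 := by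
  rcases hv with ⟨a, ha, rfl⟩ | ⟨a, b, hab, hb, rfl | rfl⟩ <;>
    refine ⟨⟨a, by omega⟩, ?_, fun j (hj : (j : ℕ) < a) => ?_⟩ <;>
    simp only [eN, Pi.sub_apply, Pi.add_apply] <;>
    split_ifs <;> first | omega | norm_num

lemma neg_notMem_posB {v : Fin n → ℚ} (hv : v ∈ PosB n) : -v ∉ PosB n := by
  intro hneg
  obtain ⟨i, hi, hlt_i⟩ := exists_leading_eq_one_of_mem_posB hv
  obtain ⟨j, hj, hlt_j⟩ := exists_leading_eq_one_of_mem_posB hneg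
  simp only [Pi.neg_apply] at hj hlt_j
  rcases lt_trichotomy i j with h | rfl | h
  · linarith [hlt_j i h]
  · linarith
  · linarith [hlt_i j h]

lemma sub_notMem_posB {a b : ℕ} (hab : a < b) (hb : b < n) : eN n b - eN n a ∉ PosB n := by
  rw [← neg_sub]
  exact neg_notMem_posB (eN_sub_eN_mem_posB hab hb)

end Roots

section Action

variable {n : ℕ}

lemma cycAct_eN (m : Fin n) {a : ℕ} (ha : a < n) :
    cycAct n m (eN n a) = eN n (Fin.cycleRange m ⟨a, ha⟩) := by
  funext j
  simp only [cycAct, eN, ← Fin.ext_iff (b := ⟨a, ha⟩), Equiv.Perm.inv_eq_iff_eq]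
  exact if_congr Fin.ext_iff rfl rfl

lemma cycAct_eN_of_lt {m a : ℕ} (hm : m < n) (h : a < m) :
    cycAct n ⟨m, hm⟩ (eN n a) = eN n (a + 1) := by
  rw [cycAct_eN _ (h.trans hm), Fin.coe_cycleRange_of_lt (Fin.lt_def.mpr h)]

lemma cycAct_eN_self {m : ℕ} (hm : m < n) : cycAct n ⟨m, hm⟩ (eN n m) = eN n 0 := by
  rw [cycAct_eN _ hm, Fin.coe_cycleRange_of_le le_rfl, if_pos rfl]

lemma cycAct_eN_of_gt {m a : ℕ} (hm : m < n) (h : m < a) (ha : a < n) :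
    cycAct n ⟨m, hm⟩ (eN n a) = eN n a := by
  rw [cycAct_eN _ ha, Fin.cycleRange_of_gt (Fin.lt_def.mpr h)]

lemma cycAct_sub (m : Fin n) (u v : Fin n → ℚ) :
    cycAct n m (u - v) = cycAct n m u - cycAct n m v := rfl

lemma sigB_sub (u v : Fin n → ℚ) : sigB n (u - v) = sigB n u - sigB n v := by
  funext j
  simp only [sigB, Pi.sub_apply]
  split_ifs <;> ring

lemma sigB_eN_of_ne_zero {a : ℕ} (ha : a ≠ 0) : sigB n (eN n a) = eN n a := by
  funext j
  simp only [sigB, eN]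
  split_ifs <;> first | omega | norm_num

lemma sigB_eN_zero : sigB n (eN n 0) = -eN n 0 := by
  funext j
  simp only [sigB, eN, Pi.neg_apply]
  split_ifs <;> norm_num

lemma simpleRoot_of_lt {i : ℕ} (hi : i < n) : simpleRoot n i = eN n (i - 1) - eN n i :=
  if_pos hi

lemma simpleRoot_self : simpleRoot n n = eN n (n - 1) :=
  if_neg (lt_irrefl n)

end Action

section SimpleRootImages

variable {n : ℕ}

lemma cycAct_simpleRoot_mem_posB {m i : ℕ} (hm : m < n) (hi1 : 1 ≤ i) (hin : i ≤ n)
    (him : i ≠ m) : cycAct n ⟨m, hm⟩ (simpleRoot n i) ∈ PosB n := by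
  rcases hin.lt_or_eq with hin | rfl
  · rw [simpleRoot_of_lt hin, cycAct_sub]
    rcases lt_or_gt_of_ne him with h | h
    · rw [cycAct_eN_of_lt hm (by omega), cycAct_eN_of_lt hm h, Nat.sub_add_cancel hi1]
      exact eN_sub_eN_mem_posB (by omega) (by omega)
    · rw [cycAct_eN_of_gt hm h hin]
      rcases (Nat.le_sub_one_of_lt h).lt_or_eq with h' | h'
      · rw [cycAct_eN_of_gt hm h' (by omega)]
        exact eN_sub_eN_mem_posB (by omega) hin
      · rw [← h', cycAct_eN_self]
        exact eN_sub_eN_mem_posB (by omega) hin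
  · rw [simpleRoot_self, cycAct_eN _ (by omega)]
    exact eN_mem_posB (Fin.is_lt _)

lemma cycAct_simpleRoot_self_notMem_posB {m : ℕ} (hm : m < n) (hm1 : 1 ≤ m) :
    cycAct n ⟨m, hm⟩ (simpleRoot n m) ∉ PosB n := by
  rw [simpleRoot_of_lt hm, cycAct_sub, cycAct_eN_of_lt hm (by omega), Nat.sub_add_cancel hm1,
    cycAct_eN_self]
  exact sub_notMem_posB hm1 hm

lemma sigB_cycAct_simpleRoot_mem_posB {m i : ℕ} (hm : m < n) (hi1 : 1 ≤ i) (hin : i ≤ n)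
    (him : i ≠ m + 1) : sigB n (cycAct n ⟨m, hm⟩ (simpleRoot n i)) ∈ PosB n := by
  rcases hin.lt_or_eq with hin | rfl
  · rw [simpleRoot_of_lt hin, cycAct_sub, sigB_sub]
    rcases lt_trichotomy i m with h | rfl | h
    · rw [cycAct_eN_of_lt hm (by omega), cycAct_eN_of_lt hm h, Nat.sub_add_cancel hi1,
        sigB_eN_of_ne_zero (by omega), sigB_eN_of_ne_zero (by omega)]
      exact eN_sub_eN_mem_posB (by omega) (by omega)
    · rw [cycAct_eN_of_lt hm (by omega), Nat.sub_add_cancel hi1, cycAct_eN_self,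
        sigB_eN_of_ne_zero (by omega), sigB_eN_zero, sub_neg_eq_add, add_comm]
      exact eN_add_eN_mem_posB (by omega) hin
    · rw [cycAct_eN_of_gt hm (by omega) (by omega), cycAct_eN_of_gt hm h hin,
        sigB_eN_of_ne_zero (by omega), sigB_eN_of_ne_zero (by omega)]
      exact eN_sub_eN_mem_posB (by omega) hin
  · rw [simpleRoot_self, cycAct_eN_of_gt hm (by omega) (by omega), sigB_eN_of_ne_zero (by omega)]
    exact eN_mem_posB (by omega)

lemma sigB_cycAct_simpleRoot_succ_notMem_posB {m : ℕ} (hm : m < n) :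
    sigB n (cycAct n ⟨m, hm⟩ (simpleRoot n (m + 1))) ∉ PosB n := by
  rcases (show m + 1 ≤ n from hm).lt_or_eq with h | rfl
  · rw [simpleRoot_of_lt h, Nat.add_sub_cancel, cycAct_sub, cycAct_eN_self,
      cycAct_eN_of_gt hm (by omega) h, sigB_sub, sigB_eN_zero, sigB_eN_of_ne_zero (by omega),
      ← neg_add']
    exact neg_notMem_posB (eN_add_eN_mem_posB (by omega) h)
  · rw [simpleRoot_self, Nat.add_sub_cancel, cycAct_eN_self, sigB_eN_zero]
    exact neg_notMem_posB (eN_mem_posB m.succ_pos)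

end SimpleRootImages

section Tau

variable {n : ℕ}

lemma neg_w0B_comp_apply (g : (Fin n → ℚ) → (Fin n → ℚ)) (v : Fin n → ℚ) :
    -((w0B n ∘ g) v) = g v :=
  neg_neg (g v)

lemma tauB_w0B_comp_eq_piB {g : (Fin n → ℚ) → (Fin n → ℚ)}
    (hpos : ∀ i, 1 ≤ i → i ≤ n → g (simpleRoot n i) ∈ PosB n) :
    tauB n (w0B n ∘ g) = PiB n := by
  ext v
  simp only [tauB, Set.mem_ofPred_eq, neg_w0B_comp_apply]
  refine ⟨And.left, ?_⟩
  rintro ⟨i, hi1, hin, rfl⟩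
  exact ⟨⟨i, hi1, hin, rfl⟩, hpos i hi1 hin⟩

lemma tauB_w0B_comp_eq_diff_singleton {g : (Fin n → ℚ) → (Fin n → ℚ)} {j : ℕ}
    (hj : g (simpleRoot n j) ∉ PosB n)
    (hpos : ∀ i, 1 ≤ i → i ≤ n → i ≠ j → g (simpleRoot n i) ∈ PosB n) :
    tauB n (w0B n ∘ g) = PiB n \ {simpleRoot n j} := by
  ext v
  simp only [tauB, Set.mem_ofPred_eq, neg_w0B_comp_apply, Set.mem_sdiff, Set.mem_singleton_iff]
  constructor
  · rintro ⟨hv, hgv⟩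
    exact ⟨hv, by rintro rfl; exact hj hgv⟩
  · rintro ⟨⟨i, hi1, hin, rfl⟩, hne⟩
    exact ⟨⟨i, hi1, hin, rfl⟩, hpos i hi1 hin (by rintro rfl; exact hne rfl)⟩

lemma tauB_wplus_zero (hn : 0 < n) : tauB n (wplus n ⟨0, hn⟩) = PiB n :=
  tauB_w0B_comp_eq_piB fun _ hi1 hin => cycAct_simpleRoot_mem_posB hn hi1 hin (by omega)

lemma tauB_wplus {m : ℕ} (hm : m < n) (hm1 : 1 ≤ m) :
    tauB n (wplus n ⟨m, hm⟩) = PiB n \ {simpleRoot n m} :=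
  tauB_w0B_comp_eq_diff_singleton (cycAct_simpleRoot_self_notMem_posB hm hm1)
    fun _ hi1 hin him => cycAct_simpleRoot_mem_posB hm hi1 hin him

lemma tauB_wminus {m : ℕ} (hm : m < n) :
    tauB n (wminus n ⟨m, hm⟩) = PiB n \ {simpleRoot n (m + 1)} :=
  tauB_w0B_comp_eq_diff_singleton (sigB_cycAct_simpleRoot_succ_notMem_posB hm)
    fun _ hi1 hin him => sigB_cycAct_simpleRoot_mem_posB hm hi1 hin him

end Tau

/-- `τ(w_k⁺) = τ(w_{k+1}⁻) = Π ∖ {α_{n-k}}` for `k = 1, …, n-1`,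
`τ(w_n⁺) = Π`, and `τ(w_1⁻) = Π ∖ {α_n}`. -/
theorem stmt16 (n : ℕ) (hn : 1 ≤ n) :
    (∀ k (_hk1 : 1 ≤ k) (_hk2 : k ≤ n - 1),
      tauB n (wplus n ⟨n - k, by omega⟩) = PiB n \ {simpleRoot n (n - k)} ∧
      tauB n (wminus n ⟨n - (k + 1), by omega⟩) = PiB n \ {simpleRoot n (n - k)}) ∧
    tauB n (wplus n ⟨n - n, by omega⟩) = PiB n ∧
    tauB n (wminus n ⟨n - 1, by omega⟩) = PiB n \ {simpleRoot n n} := by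
  refine ⟨fun k hk1 hk2 => ⟨tauB_wplus _ (by omega), ?_⟩, ?_, ?_⟩
  · rw [tauB_wminus, show n - (k + 1) + 1 = n - k by omega]
  · simp only [Nat.sub_self]
    exact tauB_wplus_zero hn
  · rw [tauB_wminus, Nat.sub_add_cancel hn]
end
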